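/- arXiv:1811.11526 — 7 statements merged into one kernel-verified Lean document; each statement's English description precedes it below -/
import Mathlib

section
/- Let V be a real inner product space with complex structure J (J²=-I, J orthogonal), W a real inner product space, and φ: V × V → W a symmetric bilinear map. Suppose L ⊆ V is a J-invariant subspace such that ⟨φ(X₁,Z₁), φ(X₂,Z₂)⟩ = ⟨φ(X₁,JZ₁), φ(X₂,JZ₂)⟩ for all X₁, X₂ ∈ V and Z₁, Z₂ ∈ L, and the span R₀ of {φ(X,Z) : X ∈ V, Z ∈ L} admits a well-defined map J̃ with J̃φ(X,Z) = φ(X,JZ). Then φ(JZ₁, JZ₂) = -φ(Z₁, Z₂) for all Z₁, Z₂ ∈ L. In particular φ(Z,Z) + φ(JZ,JZ) = 0 for all Z ∈ L. -/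
open scoped RealInnerProductSpace

theorem LinearMap.apply_map_map_eq_neg {R M N : Type*} [CommSemiring R] [AddCommMonoid M]
    [Module R M] [AddCommGroup N] [Module R N] (φ : M →ₗ[R] M →ₗ[R] N)
    (hφ : ∀ x y, φ x y = φ y x) (J : M →ₗ[R] M) (Jt : N →ₗ[R] N) (L : Submodule R M)
    (hJt : ∀ x, ∀ z ∈ L, Jt (φ x z) = φ x (J z))
    (hJt2 : ∀ x, ∀ z ∈ L, Jt (Jt (φ x z)) = -φ x z) {z₁ z₂ : M} (h₁ : z₁ ∈ L) (h₂ : z₂ ∈ L) :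
    φ (J z₁) (J z₂) = -φ z₁ z₂ :=
  calc φ (J z₁) (J z₂) = Jt (φ z₂ (J z₁)) := by rw [← hJt _ _ h₂, hφ]
    _ = -φ z₁ z₂ := by rw [← hJt _ _ h₁, hJt2 _ _ h₁, hφ]

theorem stmt_1_general
    (V W : Type*) [NormedAddCommGroup V] [InnerProductSpace ℝ V]
    [NormedAddCommGroup W] [InnerProductSpace ℝ W]
    (J : V →ₗ[ℝ] V)
    (φ : V →ₗ[ℝ] V →ₗ[ℝ] W) (hφsymm : ∀ X Y : V, φ X Y = φ Y X)
    (L : Submodule ℝ V)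
    (Jt : W →ₗ[ℝ] W)
    (hJt : ∀ X : V, ∀ Z ∈ L, Jt (φ X Z) = φ X (J Z))
    (hJt2 : ∀ X : V, ∀ Z ∈ L, Jt (Jt (φ X Z)) = -φ X Z) :
    (∀ Z₁ ∈ L, ∀ Z₂ ∈ L, φ (J Z₁) (J Z₂) = -φ Z₁ Z₂) ∧
      ∀ Z ∈ L, φ Z Z + φ (J Z) (J Z) = 0 := by
  have key := fun Z₁ (h₁ : Z₁ ∈ L) Z₂ (h₂ : Z₂ ∈ L) ↦
    φ.apply_map_map_eq_neg hφsymm J Jt L hJt hJt2 h₁ h₂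
  exact ⟨key, fun Z hZ ↦ by rw [key Z hZ Z hZ, add_neg_cancel]⟩

/-- the anti-invariance of φ on the J-invariant subspace L. -/
theorem stmt_1
    (V W : Type*) [NormedAddCommGroup V] [InnerProductSpace ℝ V]
    [NormedAddCommGroup W] [InnerProductSpace ℝ W]
    (J : V →ₗ[ℝ] V) (hJ2 : ∀ X : V, J (J X) = -X)
    (hJorth : ∀ X Y : V, ⟪J X, J Y⟫ = ⟪X, Y⟫)
    (φ : V →ₗ[ℝ] V →ₗ[ℝ] W) (hφsymm : ∀ X Y : V, φ X Y = φ Y X)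
    (L : Submodule ℝ V) (hLJ : ∀ Z ∈ L, J Z ∈ L)
    (hflat : ∀ X₁ X₂ : V, ∀ Z₁ ∈ L, ∀ Z₂ ∈ L,
      ⟪φ X₁ Z₁, φ X₂ Z₂⟫ = ⟪φ X₁ (J Z₁), φ X₂ (J Z₂)⟫)
    (Jt : W →ₗ[ℝ] W)
    (hJt : ∀ X : V, ∀ Z ∈ L, Jt (φ X Z) = φ X (J Z))
    (hJtiso : ∀ X₁ X₂ : V, ∀ Z₁ ∈ L, ∀ Z₂ ∈ L,
      ⟪Jt (φ X₁ Z₁), Jt (φ X₂ Z₂)⟫ = ⟪φ X₁ Z₁, φ X₂ Z₂⟫)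
    (hJt2 : ∀ X : V, ∀ Z ∈ L, Jt (Jt (φ X Z)) = -φ X Z) :
    (∀ Z₁ ∈ L, ∀ Z₂ ∈ L, φ (J Z₁) (J Z₂) = -φ Z₁ Z₂) ∧
      ∀ Z ∈ L, φ Z Z + φ (J Z) (J Z) = 0 :=
  stmt_1_general V W J φ hφsymm L Jt hJt hJt2
end

section
/- Let β: V × V → W be a flat symmetric bilinear form with respect to an inner product ⟨⟨·,·⟩⟩ on W (possibly indefinite), i.e., ⟨⟨β(X,Y), β(Z,V)⟩⟩ = ⟨⟨β(X,V), β(Z,Y)⟩⟩ for all X,Y,Z,V. If Z₀ is a regular element of β (i.e., dim B_{Z₀}(V) is maximal, where B_Y = β(Y,·)), then for any X ∈ V and Y ∈ ker B_{Z₀}, the vector β(X,Y) lies in B_{Z₀}(V) ∩ (B_{Z₀}(V))^⊥. -/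
/-!
Write `A = β Z₀` and `B = β X`. If `B y ∉ range A` for some `y ∈ ker A`, then `B y` together
with a basis `A e₁, …, A e_r` of `range A` is linearly independent. The perturbed family
`(A + t B) e₁, …, (A + t B) e_r, B y` stays independent except at the roots of a determinant
polynomial equal to `1` at `t = 0`, hence for some `t ≠ 0`; since `B y = (A + t B) (t⁻¹ y)`,
the rank of `β (Z₀ + t X) = A + t B` would then exceed that of the regular element `β Z₀`.
Orthogonality is flatness: `⟨⟨β(X,Y), β(Z₀,T)⟩⟩ = ⟨⟨β(X,T), β(Z₀,Y)⟩⟩ = 0`.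
-/

open Module Polynomial Submodule LinearMap

theorem LinearIndependent.exists_linearMap_apply_eq_single {K W ι : Type*} [Field K]
    [AddCommGroup W] [Module K W] [Fintype ι] [DecidableEq ι] {u : ι → W}
    (hu : LinearIndependent K u) :
    ∃ Q : W →ₗ[K] ι → K, ∀ i, Q (u i) = Pi.single i 1 := by
  obtain ⟨Q, hQ⟩ := LinearMap.exists_extend (Basis.span hu).equivFun.toLinearMap
  refine ⟨Q, fun i => funext fun j => ?_⟩
  simpa [Finsupp.single_apply, Pi.single_apply, eq_comm (a := j)] using
    congr_fun (LinearMap.congr_fun hQ (Basis.span hu i)) j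

theorem Matrix.eval_charpolyRev_eq_det {K ι : Type*} [CommRing K] [Fintype ι] [DecidableEq ι]
    (M : Matrix ι ι K) (t : K) : eval t M.charpolyRev = (1 - t • M).det := by
  rw [Matrix.charpolyRev, ← coe_evalRingHom, RingHom.map_det]
  congr 1
  ext i j
  simp [Matrix.one_apply, apply_ite (eval t), mul_comm t]

theorem LinearIndependent.finite_setOf_not_linearIndependent_add_smul {K W ι : Type*} [Field K]
    [AddCommGroup W] [Module K W] [Fintype ι] {u : ι → W}
    (hu : LinearIndependent K u) (v : ι → W) :
    {t : K | ¬LinearIndependent K (u + t • v)}.Finite := by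
  classical
  obtain ⟨Q, hQ⟩ := hu.exists_linearMap_apply_eq_single
  let M : Matrix ι ι K := .of fun i j => -Q (v j) i
  have hM : M.charpolyRev ≠ 0 := fun h => by simpa [h] using M.eval_charpolyRev
  refine (finite_setOfPred_isRoot hM).subset fun t ht => ?_
  by_contra hroot
  refine ht (LinearIndependent.of_comp Q ?_)
  have hcol : Q ∘ (u + t • v) = (1 - t • M).col := by
    ext j i
    simp [hQ, M, Matrix.one_apply, Pi.single_apply, eq_comm]
  rw [hcol, Matrix.linearIndependent_cols_iff_isUnit, Matrix.isUnit_iff_isUnit_det,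
    isUnit_iff_ne_zero, ← M.eval_charpolyRev_eq_det]
  exact hroot

theorem LinearMap.apply_mem_range_of_finrank_range_add_smul_le {K V W : Type*} [Field K]
    [Infinite K] [AddCommGroup V] [Module K V] [FiniteDimensional K V] [AddCommGroup W]
    [Module K W] {A B : V →ₗ[K] W}
    (hmax : ∀ t : K, finrank K (range (A + t • B)) ≤ finrank K (range A))
    {y : V} (hy : A y = 0) : B y ∈ range A := by
  by_contra hBy
  let s := finBasis K (range A)
  choose e he using fun i => mem_range.mp (s i).2
  have hAe : LinearIndependent K (A ∘ e) := by
    rw [show A ∘ e = (range A).subtype ∘ s from funext he]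
    exact s.linearIndependent.map' _ (ker_subtype _)
  have hBy' : B y ∉ span K (Set.range (A ∘ e)) := fun h =>
    hBy (span_le.mpr (by rintro _ ⟨i, rfl⟩; exact mem_range_self A (e i)) h)
  let u : Fin (finrank K (range A) + 1) → W := Fin.snoc (A ∘ e) (B y)
  let v : Fin (finrank K (range A) + 1) → W := Fin.snoc (B ∘ e) 0
  obtain ⟨t, ht⟩ := (((hAe.finSnoc hBy').finite_setOf_not_linearIndependent_add_smul v).insert
    0).exists_notMem
  simp only [Set.mem_insert_iff, Set.mem_ofPred_eq, not_or, not_not] at ht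
  obtain ⟨ht0, hli⟩ := ht
  have hmem : ∀ i, (u + t • v) i ∈ range (A + t • B) := by
    refine Fin.lastCases ?_ fun i => ?_
    · refine ⟨t⁻¹ • y, ?_⟩
      simp [u, v, hy, smul_smul, ht0]
    · exact ⟨e i, by simp [u, v]⟩
  have hle := Submodule.finrank_mono (span_le.mpr (Set.range_subset_iff.mpr hmem))
  rw [finrank_span_eq_card hli, Fintype.card_fin] at hle
  exact absurd (hle.trans (hmax t)) (Nat.not_succ_le_self _)

theorem stmt_2_general
    (V W : Type*) [AddCommGroup V] [Module ℝ V] [FiniteDimensional ℝ V]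
    [AddCommGroup W] [Module ℝ W]
    (b : W →ₗ[ℝ] W →ₗ[ℝ] ℝ)
    (β : V →ₗ[ℝ] V →ₗ[ℝ] W)
    (hflat : ∀ X Y Z T : V, b (β X Y) (β Z T) = b (β X T) (β Z Y))
    (Z₀ : V)
    (hreg : ∀ X : V, Module.finrank ℝ (LinearMap.range (β X)) ≤
      Module.finrank ℝ (LinearMap.range (β Z₀)))
    (X Y : V) (hY : β Z₀ Y = 0) :
    β X Y ∈ LinearMap.range (β Z₀) ∧
      ∀ w ∈ LinearMap.range (β Z₀), b (β X Y) w = 0 := by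
  refine ⟨apply_mem_range_of_finrank_range_add_smul_le (fun t => ?_) hY, ?_⟩
  · rw [← map_smul, ← map_add]
    exact hreg (Z₀ + t • X)
  · rintro _ ⟨T, rfl⟩
    rw [hflat X Y Z₀ T, hY, map_zero]

/-- Moore's lemma on flat bilinear forms. -/
theorem stmt_2
    (V W : Type*) [AddCommGroup V] [Module ℝ V] [FiniteDimensional ℝ V]
    [AddCommGroup W] [Module ℝ W] [FiniteDimensional ℝ W]
    (b : W →ₗ[ℝ] W →ₗ[ℝ] ℝ) (hb : ∀ x y : W, b x y = b y x)
    (β : V →ₗ[ℝ] V →ₗ[ℝ] W) (hβsymm : ∀ x y : V, β x y = β y x)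
    (hflat : ∀ X Y Z T : V, b (β X Y) (β Z T) = b (β X T) (β Z Y))
    (Z₀ : V)
    (hreg : ∀ X : V, Module.finrank ℝ (LinearMap.range (β X)) ≤
      Module.finrank ℝ (LinearMap.range (β Z₀)))
    (X Y : V) (hY : β Z₀ Y = 0) :
    β X Y ∈ LinearMap.range (β Z₀) ∧
      ∀ w ∈ LinearMap.range (β Z₀), b (β X Y) w = 0 :=
  stmt_2_general V W b β hflat Z₀ hreg X Y hY
end

section
/- Let V be a 2n-dimensional real inner product space with orthogonal complex structure J, N a p-dimensional inner product space with p ≤ n-2, and α: V × V → N a symmetric bilinear map such that the tensor R defined by the Gauss equation with c = -1 satisfies R(X,Y)∘J = J∘R(X,Y). Then there exists a J-invariant subspace L ⊆ V with dim L ≥ 2(n-p-1) such that for every nonzero Z ∈ L, the holomorphic sectional curvature K(Z,JZ) := ⟨R(Z,JZ)JZ,Z⟩/‖Z∧JZ‖² satisfies K(Z,JZ) ≤ 0. -/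
open scoped RealInnerProductSpace

/-- The (4,0)-curvature tensor `⟨R(X,Y)Z,W⟩` determined by the Gauss equation in a
space form of curvature `c`. -/
noncomputable def gaussR {V N : Type*} [NormedAddCommGroup V] [InnerProductSpace ℝ V]
    [NormedAddCommGroup N] [InnerProductSpace ℝ N]
    (c : ℝ) (α : V →ₗ[ℝ] V →ₗ[ℝ] N) (X Y Z W : V) : ℝ :=
  c * (⟪Y, Z⟫ * ⟪X, W⟫ - ⟪X, Z⟫ * ⟪Y, W⟫) + ⟪α X W, α Y Z⟫ - ⟪α X Z, α Y W⟫

/-!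
Let `α̂ = (α, ⟨·,·⟩)` be the second fundamental form of `V` in the flat Lorentz space containing
`ℍ`, and for `ζ ∈ V ⊗ ℂ` let `β_ζ X = α̂(X - iJX, ζ)`. Through the Gauss equation the
Kaehler symmetries say that `β` is flat for the complex bilinear Lorentz product:
`⟨β_η X, β_ζ Y⟩ = ⟨β_ζ X, β_η Y⟩`. Take `ζ₀` with `β_ζ₀` of maximal rank and `L = ker β_ζ₀`;
it is `J`-invariant of codimension at most `2(p + 1)`. For `Z ∈ L` and `η = Z + iJZ`, maximality
of the rank along the line `ζ₀ + tη` puts `β_η Z` in the range of `β_ζ₀`, so flatness makes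
`β_η Z` isotropic. Finally `4 K(Z, JZ) ‖Z‖⁴` is the Lorentz square of `β_η Z` minus two squared
norms.
-/

open Module LinearMap Topology

theorem exists_forall_finrank_range_le {ι K M W : Type*} [Nonempty ι] [DivisionRing K]
    [AddCommGroup M] [Module K M] [AddCommGroup W] [Module K W] [FiniteDimensional K W]
    (f : ι → M →ₗ[K] W) :
    ∃ i₀, ∀ i, finrank K (range (f i)) ≤ finrank K (range (f i₀)) := by
  have hbdd : BddAbove (Set.range fun i => finrank K (range (f i))) :=
    ⟨finrank K W, by rintro _ ⟨i, rfl⟩; exact Submodule.finrank_le _⟩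
  obtain ⟨i₀, hi₀⟩ := Nat.sSup_mem (Set.range_nonempty _) hbdd
  exact ⟨i₀, fun i => (le_csSup hbdd ⟨i, rfl⟩).trans_eq hi₀.symm⟩

theorem LinearMap.apply_mem_range_of_finrank_range_add_smul_le_s4 {𝕜 M W : Type*}
    [NontriviallyNormedField 𝕜] [CompleteSpace 𝕜] [AddCommGroup M] [Module 𝕜 M]
    [NormedAddCommGroup W] [NormedSpace 𝕜 W] [FiniteDimensional 𝕜 W] {T S : M →ₗ[𝕜] W}
    (hmax : ∀ t : 𝕜, finrank 𝕜 (range (T + t • S)) ≤ finrank 𝕜 (range T))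
    {X : M} (hX : T X = 0) : S X ∈ range T := by
  by_contra hSX
  let b := finBasis 𝕜 (range T)
  choose v hv using fun j => mem_range.mp (b j).2
  have hTv : LinearIndependent 𝕜 fun j => T (v j) := by
    simp only [hv]; exact b.linearIndependent.map' _ (Submodule.ker_subtype _)
  let c : 𝕜 → Fin (finrank 𝕜 (range T) + 1) → W :=
    fun t => Fin.snoc (fun j => T (v j) + t • S (v j)) (S X)
  have hc0 : LinearIndependent 𝕜 (c 0) := by
    simp only [c, zero_smul, add_zero, linearIndependent_finSnoc]
    refine ⟨hTv, fun h => hSX (Submodule.span_le.mpr ?_ h)⟩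
    rintro _ ⟨j, rfl⟩
    exact mem_range_self T (v j)
  have hcont : Continuous c := by
    refine continuous_pi fun i => Fin.lastCases ?_ (fun j => ?_) i
    · simpa only [c, Fin.snoc_last] using continuous_const
    · simp only [c, Fin.snoc_castSucc]; fun_prop
  -- Linear independence is an open condition, so it survives some small `t ≠ 0`.
  obtain ⟨t, hind, ht⟩ : ∃ t, LinearIndependent 𝕜 (c t) ∧ t ≠ 0 :=
    ((hcont.tendsto 0).eventually hc0.eventually |>.filter_mono nhdsWithin_le_nhds
      |>.and self_mem_nhdsWithin).exists (f := 𝓝[≠] 0)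
  have hmem : Set.range (c t) ⊆ range (T + t • S) := by
    rintro _ ⟨i, rfl⟩
    refine Fin.lastCases ⟨t⁻¹ • X, ?_⟩ (fun j => ⟨v j, ?_⟩) i
    · simp [c, hX, ht]
    · simp [c]
  have hspan := finrank_span_eq_card hind
  have hle := Submodule.finrank_mono (Submodule.span_le.mpr hmem)
  simp only [Fintype.card_fin] at hspan
  have := hmax t
  omega

section HolomorphicForm

variable {R V W : Type*} [CommRing R] [AddCommGroup V] [Module R V] [AddCommGroup W] [Module R W]
  (J : V →ₗ[R] V) (A : V →ₗ[R] V →ₗ[R] W)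

/-- With `W × W` read as the complexification of `W`, `ζ = (u, v)` as `u + i v` and `J` as the
complex structure, this is `X ↦ A (X - i J X) ζ`. -/
def holomorphicForm (ζ : V × V) : V →ₗ[R] W × W :=
  (A.flip ζ.1 + A.flip ζ.2 ∘ₗ J).prod (A.flip ζ.2 - A.flip ζ.1 ∘ₗ J)

@[simp]
theorem holomorphicForm_apply (ζ : V × V) (X : V) :
    holomorphicForm J A ζ X = (A X ζ.1 + A (J X) ζ.2, A X ζ.2 - A (J X) ζ.1) :=
  rfl

theorem holomorphicForm_add_smul (ζ η : V × V) (t : R) :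
    holomorphicForm J A (ζ + t • η) = holomorphicForm J A ζ + t • holomorphicForm J A η := by
  ext X <;> simp only [holomorphicForm_apply, Prod.fst_add, Prod.snd_add, Prod.smul_fst,
    Prod.smul_snd, map_add, map_smul, LinearMap.add_apply, LinearMap.smul_apply] <;> module

variable {J}

theorem holomorphicForm_apply_J (hJ2 : ∀ X, J (J X) = -X) (ζ : V × V) (X : V) :
    holomorphicForm J A ζ (J X) = (-(holomorphicForm J A ζ X).2, (holomorphicForm J A ζ X).1) := by
  simp only [holomorphicForm_apply, hJ2, map_neg, LinearMap.neg_apply, Prod.mk.injEq]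
  constructor <;> abel

theorem apply_mem_ker_holomorphicForm (hJ2 : ∀ X, J (J X) = -X) {ζ : V × V} {X : V}
    (hX : X ∈ ker (holomorphicForm J A ζ)) : J X ∈ ker (holomorphicForm J A ζ) := by
  rw [mem_ker] at hX ⊢
  simp [holomorphicForm_apply_J A hJ2, hX]

end HolomorphicForm

section Gauss

variable {V N : Type*} [NormedAddCommGroup V] [InnerProductSpace ℝ V]
  [NormedAddCommGroup N] [InnerProductSpace ℝ N] {J : V →ₗ[ℝ] V} {α : V →ₗ[ℝ] V →ₗ[ℝ] N}

/-- The second fundamental form of `V` in the Lorentz space `𝕃 ⊃ ℍ`; the `ℝ`-component is the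
coefficient of the position vector. -/
def lorentzSecondFundamentalForm (α : V →ₗ[ℝ] V →ₗ[ℝ] N) : V →ₗ[ℝ] V →ₗ[ℝ] N × ℝ :=
  LinearMap.mk₂ ℝ (fun X Y => (α X Y, ⟪X, Y⟫))
    (fun _ _ _ => by simp [inner_add_left]) (fun _ _ _ => by simp [real_inner_smul_left])
    (fun _ _ _ => by simp [inner_add_right]) (fun _ _ _ => by simp [real_inner_smul_right])

@[simp]
theorem lorentzSecondFundamentalForm_apply (α : V →ₗ[ℝ] V →ₗ[ℝ] N) (X Y : V) :
    lorentzSecondFundamentalForm α X Y = (α X Y, ⟪X, Y⟫) :=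
  rfl

def lorentzInner (w w' : N × ℝ) : ℝ :=
  ⟪w.1, w'.1⟫ - w.2 * w'.2

/-- The real part of the complex bilinear extension of `lorentzInner` to `(N × ℝ) ⊗ ℂ`,
represented as `(N × ℝ) × (N × ℝ)`. -/
def lorentzInnerComplexRe (w w' : (N × ℝ) × (N × ℝ)) : ℝ :=
  lorentzInner w.1 w'.1 - lorentzInner w.2 w'.2

theorem gaussR_comm (c : ℝ) (hα : ∀ X Y, α X Y = α Y X)
    (X Y Z W : V) : gaussR c α X Y Z W = gaussR c α Z W X Y := by
  simp only [gaussR, hα Z, hα W, real_inner_comm X, real_inner_comm Y, real_inner_comm (α Y Z),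
    real_inner_comm (α Y W)]
  ring

theorem gaussR_J_J (hα : ∀ X Y, α X Y = α Y X)
    (hK : ∀ X Y Z W, gaussR (-1) α X Y (J Z) (J W) = gaussR (-1) α X Y Z W) (X Y Z W : V) :
    gaussR (-1) α (J X) (J Y) Z W = gaussR (-1) α X Y Z W := by
  rw [gaussR_comm _ hα, hK, gaussR_comm _ hα]

theorem gaussR_J_left_add_J_right
    (hα : ∀ X Y, α X Y = α Y X) (hJ2 : ∀ X, J (J X) = -X)
    (hK : ∀ X Y Z W, gaussR (-1) α X Y (J Z) (J W) = gaussR (-1) α X Y Z W) (X Y Z W : V) :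
    gaussR (-1) α (J X) Y Z W + gaussR (-1) α X (J Y) Z W = 0 := by
  rw [gaussR_comm _ hα (J X), gaussR_comm _ hα X, ← hK Z W X (J Y), hJ2]
  simp only [gaussR, map_neg, inner_neg_left, inner_neg_right]
  ring

/-- This is `R(X - iJX, Y - iJY, ·, ·) = 0`, rewritten through the Gauss equation. -/
theorem lorentzInnerComplexRe_holomorphicForm_comm
    (hα : ∀ X Y, α X Y = α Y X) (hJ2 : ∀ X, J (J X) = -X)
    (hK : ∀ X Y Z W, gaussR (-1) α X Y (J Z) (J W) = gaussR (-1) α X Y Z W)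
    (X Y : V) (ζ η : V × V) :
    lorentzInnerComplexRe (holomorphicForm J (lorentzSecondFundamentalForm α) η X)
        (holomorphicForm J (lorentzSecondFundamentalForm α) ζ Y) =
      lorentzInnerComplexRe (holomorphicForm J (lorentzSecondFundamentalForm α) ζ X)
        (holomorphicForm J (lorentzSecondFundamentalForm α) η Y) := by
  have e1 := gaussR_J_J hα hK X Y ζ.1 η.1
  have e2 := gaussR_J_J hα hK X Y ζ.2 η.2
  have e3 := gaussR_J_left_add_J_right hα hJ2 hK X Y ζ.1 η.2
  have e4 := gaussR_J_left_add_J_right hα hJ2 hK X Y ζ.2 η.1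
  simp only [gaussR] at e1 e2 e3 e4
  simp only [lorentzInnerComplexRe, lorentzInner, holomorphicForm_apply,
    lorentzSecondFundamentalForm_apply, Prod.fst_add, Prod.snd_add, Prod.fst_sub, Prod.snd_sub,
    inner_add_left, inner_add_right, inner_sub_left, inner_sub_right]
  linear_combination (-1 : ℝ) * e1 + e2 + e3 + e4

theorem inner_J_self_eq_zero (hJ2 : ∀ X, J (J X) = -X)
    (hJorth : ∀ X Y, ⟪J X, J Y⟫ = ⟪X, Y⟫) (X : V) : ⟪X, J X⟫ = 0 := by
  have h := hJorth X (J X)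
  rw [hJ2, inner_neg_right, real_inner_comm] at h
  linarith

theorem four_mul_gaussR_holomorphic
    (hα : ∀ X Y, α X Y = α Y X) (hJ2 : ∀ X, J (J X) = -X)
    (hJorth : ∀ X Y, ⟪J X, J Y⟫ = ⟪X, Y⟫) (Z : V) :
    let w := holomorphicForm J (lorentzSecondFundamentalForm α) (Z, J Z) Z
    4 * gaussR (-1) α Z (J Z) (J Z) Z =
      lorentzInnerComplexRe w w - ‖α Z Z - α (J Z) (J Z)‖ ^ 2 - 4 * ‖α Z (J Z)‖ ^ 2 := by
  have hZJZ := inner_J_self_eq_zero hJ2 hJorth Z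
  simp only [lorentzInnerComplexRe, lorentzInner, holomorphicForm_apply,
    lorentzSecondFundamentalForm_apply, gaussR, hα (J Z) Z, sub_self, real_inner_comm Z (J Z),
    hZJZ, hJorth, ← real_inner_self_eq_norm_sq, Prod.fst_add, Prod.snd_add, Prod.fst_zero,
    Prod.snd_zero, inner_zero_left, inner_add_left, inner_add_right, inner_sub_left,
    inner_sub_right, real_inner_comm (α (J Z) (J Z))]
  ring

theorem gaussR_holomorphic_nonpos_of_isotropic
    (hα : ∀ X Y, α X Y = α Y X) (hJ2 : ∀ X, J (J X) = -X)
    (hJorth : ∀ X Y, ⟪J X, J Y⟫ = ⟪X, Y⟫) {Z : V}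
    (hiso : let w := holomorphicForm J (lorentzSecondFundamentalForm α) (Z, J Z) Z
      lorentzInnerComplexRe w w = 0) :
    gaussR (-1) α Z (J Z) (J Z) Z ≤ 0 := by
  have h := four_mul_gaussR_holomorphic hα hJ2 hJorth Z
  simp only at h hiso
  rw [hiso] at h
  nlinarith [sq_nonneg ‖α Z Z - α (J Z) (J Z)‖, sq_nonneg ‖α Z (J Z)‖]

end Gauss

theorem stmt_4_general
    (V N : Type*) [NormedAddCommGroup V] [InnerProductSpace ℝ V] [FiniteDimensional ℝ V]
    [NormedAddCommGroup N] [InnerProductSpace ℝ N] [FiniteDimensional ℝ N]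
    (n p : ℕ)
    (hV : Module.finrank ℝ V = 2 * n) (hN : Module.finrank ℝ N = p)
    (J : V →ₗ[ℝ] V) (hJ2 : ∀ X : V, J (J X) = -X)
    (hJorth : ∀ X Y : V, ⟪J X, J Y⟫ = ⟪X, Y⟫)
    (α : V →ₗ[ℝ] V →ₗ[ℝ] N) (hαsymm : ∀ X Y : V, α X Y = α Y X)
    (hKaehler : ∀ X Y Z W : V,
      gaussR (-1) α X Y (J Z) (J W) = gaussR (-1) α X Y Z W) :
    ∃ L : Submodule ℝ V, (∀ Z ∈ L, J Z ∈ L) ∧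
      2 * (n - p - 1) ≤ Module.finrank ℝ L ∧
      ∀ Z ∈ L, Z ≠ 0 →
        gaussR (-1) α Z (J Z) (J Z) Z / (‖Z‖ ^ 2 * ‖J Z‖ ^ 2 - ⟪Z, J Z⟫ ^ 2) ≤ 0 := by
  set β := holomorphicForm J (lorentzSecondFundamentalForm α)
  obtain ⟨ζ₀, hζ₀⟩ := exists_forall_finrank_range_le β
  refine ⟨ker (β ζ₀), fun Z => apply_mem_ker_holomorphicForm _ hJ2, ?_, fun Z hZ _ => ?_⟩
  · have hrank := (range (β ζ₀)).finrank_le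
    have hker := finrank_range_add_finrank_ker (β ζ₀)
    simp only [finrank_prod, hN, finrank_self] at hrank
    omega
  · obtain ⟨Y, hY⟩ : β (Z, J Z) Z ∈ range (β ζ₀) :=
      apply_mem_range_of_finrank_range_add_smul_le_s4
        (fun t => by rw [← holomorphicForm_add_smul]; exact hζ₀ _) hZ
    have hiso : lorentzInnerComplexRe (β (Z, J Z) Z) (β (Z, J Z) Z) = 0 := by
      conv_lhs => arg 2; rw [← hY]
      rw [lorentzInnerComplexRe_holomorphicForm_comm hαsymm hJ2 hKaehler, mem_ker.mp hZ]
      simp [lorentzInnerComplexRe, lorentzInner]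
    refine div_nonpos_of_nonpos_of_nonneg
      (gaussR_holomorphic_nonpos_of_isotropic hαsymm hJ2 hJorth hiso) ?_
    rw [inner_J_self_eq_zero hJ2 hJorth, zero_pow two_ne_zero, sub_zero]
    positivity

/-- pointwise content of Theorem 5 of the paper. -/
theorem stmt_4
    (V N : Type*) [NormedAddCommGroup V] [InnerProductSpace ℝ V] [FiniteDimensional ℝ V]
    [NormedAddCommGroup N] [InnerProductSpace ℝ N] [FiniteDimensional ℝ N]
    (n p : ℕ) (hp : p + 2 ≤ n)
    (hV : Module.finrank ℝ V = 2 * n) (hN : Module.finrank ℝ N = p)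
    (J : V →ₗ[ℝ] V) (hJ2 : ∀ X : V, J (J X) = -X)
    (hJorth : ∀ X Y : V, ⟪J X, J Y⟫ = ⟪X, Y⟫)
    (α : V →ₗ[ℝ] V →ₗ[ℝ] N) (hαsymm : ∀ X Y : V, α X Y = α Y X)
    (hKaehler : ∀ X Y Z W : V,
      gaussR (-1) α X Y (J Z) (J W) = gaussR (-1) α X Y Z W) :
    ∃ L : Submodule ℝ V, (∀ Z ∈ L, J Z ∈ L) ∧
      2 * (n - p - 1) ≤ Module.finrank ℝ L ∧
      ∀ Z ∈ L, Z ≠ 0 →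
        gaussR (-1) α Z (J Z) (J Z) Z / (‖Z‖ ^ 2 * ‖J Z‖ ^ 2 - ⟪Z, J Z⟫ ^ 2) ≤ 0 :=
  stmt_4_general V N n p hV hN J hJ2 hJorth α hαsymm hKaehler
end

section
/- Let V be a real inner product space of dimension 2n, N an inner product space, and α: V × V → N a symmetric bilinear map. Suppose there exist a unit vector δ ∈ N, a J-invariant subspace L ⊆ V with dim L ≥ 2, and a map φ(X,Y) = α(X,Y) - ⟨A_δX,Y⟩δ (with ⟨A_δX,Y⟩ = ⟨α(X,Y),δ⟩) such that ⟨A_δ X, Z⟩ = ⟨X,Z⟩ for all X ∈ V, Z ∈ L, and φ(JZ,JZ) = -φ(Z,Z) for all Z ∈ L. Then for every unit vector Z ∈ L, the holomorphic sectional curvature computed via the Gauss equation with c = -1 equals K(Z,JZ) = -‖φ(Z,Z)‖² - ‖φ(Z,JZ)‖², hence K(Z,JZ) ≤ 0. -/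
/-!
On `L` the shape operator `A_δ` is the identity, so for a unit `Z ∈ L` the second fundamental
form splits as `α(Z,Z) = δ + φ(Z,Z)`, `α(JZ,JZ) = δ - φ(Z,Z)` and `α(Z,JZ) = φ(Z,JZ)`.
In the Gauss equation the term `⟪α(Z,Z), α(JZ,JZ)⟫ = 1 - ‖φ(Z,Z)‖²` then exactly cancels the
ambient curvature `c = -1`, leaving `-‖φ(Z,Z)‖² - ‖φ(Z,JZ)‖²`.
-/

open scoped RealInnerProductSpace

section

variable {E : Type*} [NormedAddCommGroup E] [InnerProductSpace ℝ E]

theorem real_inner_add_sub_eq_norm_sq_sub_norm_sq (x y : E) :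
    ⟪x + y, x - y⟫ = ‖x‖ ^ 2 - ‖y‖ ^ 2 := by
  rw [inner_add_left, inner_sub_right, inner_sub_right, real_inner_comm x y,
    real_inner_self_eq_norm_sq, real_inner_self_eq_norm_sq]
  ring

theorem real_inner_self_apply_eq_zero_of_sq_eq_neg {J : E →ₗ[ℝ] E}
    (hJ2 : ∀ X, J (J X) = -X) (hJorth : ∀ X Y, ⟪J X, J Y⟫ = ⟪X, Y⟫) (X : E) :
    ⟪X, J X⟫ = 0 := by
  have h := hJorth (J X) X
  rw [hJ2, inner_neg_left, real_inner_comm X (J X)] at h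
  linarith

end

section

variable {V N : Type*} [NormedAddCommGroup V] [InnerProductSpace ℝ V]
  [NormedAddCommGroup N] [InnerProductSpace ℝ N]

theorem gaussR_sectional {α : V →ₗ[ℝ] V →ₗ[ℝ] N} (hαsymm : ∀ X Y, α X Y = α Y X)
    (c : ℝ) (X Y : V) :
    gaussR c α X Y Y X =
      c * (‖Y‖ ^ 2 * ‖X‖ ^ 2 - ⟪X, Y⟫ ^ 2) + ⟪α X X, α Y Y⟫ - ‖α X Y‖ ^ 2 := by
  rw [gaussR, real_inner_self_eq_norm_sq, real_inner_self_eq_norm_sq, real_inner_comm Y X,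
    hαsymm Y X, real_inner_self_eq_norm_sq]
  ring

theorem gaussR_neg_one_of_orthonormal {α : V →ₗ[ℝ] V →ₗ[ℝ] N}
    (hαsymm : ∀ X Y, α X Y = α Y X) {X Y : V} (hX : ‖X‖ = 1) (hY : ‖Y‖ = 1)
    (hXY : ⟪X, Y⟫ = 0) {δ u : N} (hδ : ‖δ‖ = 1)
    (hXX : α X X = δ + u) (hYY : α Y Y = δ - u) :
    gaussR (-1) α X Y Y X = -‖u‖ ^ 2 - ‖α X Y‖ ^ 2 := by
  rw [gaussR_sectional hαsymm, hXX, hYY, real_inner_add_sub_eq_norm_sq_sub_norm_sq, hX, hY, hXY,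
    hδ]
  ring

end

theorem stmt_6_general
    (V N : Type*) [NormedAddCommGroup V] [InnerProductSpace ℝ V]
    [NormedAddCommGroup N] [InnerProductSpace ℝ N]
    (J : V →ₗ[ℝ] V) (hJ2 : ∀ X : V, J (J X) = -X)
    (hJorth : ∀ X Y : V, ⟪J X, J Y⟫ = ⟪X, Y⟫)
    (α : V →ₗ[ℝ] V →ₗ[ℝ] N) (hαsymm : ∀ X Y : V, α X Y = α Y X)
    (δ : N) (hδ : ‖δ‖ = 1)
    (L : Submodule ℝ V) (hLJ : ∀ Z ∈ L, J Z ∈ L)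
    (φ : V → V → N) (hφ : ∀ X Y : V, φ X Y = α X Y - ⟪α X Y, δ⟫ • δ)
    (hAδ : ∀ X : V, ∀ Z ∈ L, ⟪α X Z, δ⟫ = ⟪X, Z⟫)
    (hanti : ∀ Z ∈ L, φ (J Z) (J Z) = -φ Z Z) :
    ∀ Z ∈ L, ‖Z‖ = 1 →
      gaussR (-1) α Z (J Z) (J Z) Z = -‖φ Z Z‖ ^ 2 - ‖φ Z (J Z)‖ ^ 2 ∧
      gaussR (-1) α Z (J Z) (J Z) Z ≤ 0 := by
  intro Z hZ hZ1
  have hsplit : ∀ X, ∀ W ∈ L, α X W = ⟪X, W⟫ • δ + φ X W := fun X W hW => by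
    rw [hφ, hAδ X W hW, add_sub_cancel]
  have hZJZ : ⟪Z, J Z⟫ = 0 := real_inner_self_apply_eq_zero_of_sq_eq_neg hJ2 hJorth Z
  have hJZ1 : ‖J Z‖ = 1 := by
    rw [← sq_eq_sq₀ (norm_nonneg _) zero_le_one, ← real_inner_self_eq_norm_sq, hJorth,
      real_inner_self_eq_norm_sq, hZ1]
  have hZZ : α Z Z = δ + φ Z Z := by
    rw [hsplit Z Z hZ, real_inner_self_eq_norm_sq, hZ1, one_pow, one_smul]
  have hJJ : α (J Z) (J Z) = δ - φ Z Z := by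
    rw [hsplit _ _ (hLJ Z hZ), hanti Z hZ, real_inner_self_eq_norm_sq, hJZ1, one_pow, one_smul,
      sub_eq_add_neg]
  have hZJ : α Z (J Z) = φ Z (J Z) := by
    rw [hsplit _ _ (hLJ Z hZ), hZJZ, zero_smul, zero_add]
  have hK := gaussR_neg_one_of_orthonormal hαsymm hZ1 hJZ1 hZJZ hδ hZZ hJJ
  rw [hZJ] at hK
  exact ⟨hK, hK ▸ by nlinarith [sq_nonneg ‖φ Z Z‖, sq_nonneg ‖φ Z (J Z)‖]⟩

/-- the holomorphic sectional curvature formula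
`K(Z,JZ) = -‖φ(Z,Z)‖² - ‖φ(Z,JZ)‖² ≤ 0`. -/
theorem stmt_6
    (V N : Type*) [NormedAddCommGroup V] [InnerProductSpace ℝ V] [FiniteDimensional ℝ V]
    [NormedAddCommGroup N] [InnerProductSpace ℝ N]
    (n : ℕ) (hV : Module.finrank ℝ V = 2 * n)
    (J : V →ₗ[ℝ] V) (hJ2 : ∀ X : V, J (J X) = -X)
    (hJorth : ∀ X Y : V, ⟪J X, J Y⟫ = ⟪X, Y⟫)
    (α : V →ₗ[ℝ] V →ₗ[ℝ] N) (hαsymm : ∀ X Y : V, α X Y = α Y X)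
    (δ : N) (hδ : ‖δ‖ = 1)
    (L : Submodule ℝ V) (hLJ : ∀ Z ∈ L, J Z ∈ L) (hLdim : 2 ≤ Module.finrank ℝ L)
    (φ : V → V → N) (hφ : ∀ X Y : V, φ X Y = α X Y - ⟪α X Y, δ⟫ • δ)
    (hAδ : ∀ X : V, ∀ Z ∈ L, ⟪α X Z, δ⟫ = ⟪X, Z⟫)
    (hanti : ∀ Z ∈ L, φ (J Z) (J Z) = -φ Z Z) :
    ∀ Z ∈ L, ‖Z‖ = 1 →
      gaussR (-1) α Z (J Z) (J Z) Z = -‖φ Z Z‖ ^ 2 - ‖φ Z (J Z)‖ ^ 2 ∧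
      gaussR (-1) α Z (J Z) (J Z) Z ≤ 0 :=
  stmt_6_general V N J hJ2 hJorth α hαsymm δ hδ L hLJ φ hφ hAδ hanti
end

section
/- Let V be a real inner product space with orthogonal complex structure J, N an inner product space, and α: V × V → N symmetric bilinear such that the curvature tensor R defined via the Gauss equation with curvature c satisfies the Kaehler identity R(X,Y)∘J = J∘R(X,Y). Let X₁,…,X_{2n} be an orthonormal basis of V diagonalizing α (i.e., α(X_i, X_j) = 0 for i ≠ j), and let K_{ij} = c + ⟨α_i, α_j⟩ with α_i = α(X_i,X_i) denote the sectional curvature of span{X_i,X_j}. Then ⟨JX_i, X_k⟩·K_{ij} = 0 whenever i, j, k are pairwise distinct. -/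
open scoped RealInnerProductSpace

/-!
In the frame `X_i` diagonalizing `α`, the Gauss equation gives `⟨R(X_i,X_j)Z, X_k⟩ = 0` for every
`Z` when `i, j, k` are distinct, and `⟨R(X_i,X_j)X_j, W⟩ = ⟨X_i, W⟩ K_{ij}`. Since `J² = -1`, the
Kaehler identity reads `⟨R(X,Y)JZ, W⟩ + ⟨R(X,Y)Z, JW⟩ = 0`; with `Z = X_j`, `W = X_k` it yields
`⟨X_i, JX_k⟩ K_{ij} = 0`, and `J` is skew-adjoint.
-/

section

variable {V N : Type*} [NormedAddCommGroup V] [InnerProductSpace ℝ V]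
  [NormedAddCommGroup N] [InnerProductSpace ℝ N]

theorem inner_map_left_eq_neg_inner_map_right {J : V →ₗ[ℝ] V} (hJ2 : ∀ X : V, J (J X) = -X)
    (hJorth : ∀ X Y : V, ⟪J X, J Y⟫ = ⟪X, Y⟫) (X Y : V) : ⟪J X, Y⟫ = -⟪X, J Y⟫ := by
  have h := hJorth X (J Y)
  rw [hJ2, inner_neg_right] at h
  linarith

theorem Module.Basis.map_eq_inner_smul_of_map_basis_eq_zero {ι : Type*} [Fintype ι]
    {b : Module.Basis ι ℝ V} (hb : Orthonormal ℝ b) {f : V →ₗ[ℝ] N} {i : ι}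
    (hf : ∀ l, l ≠ i → f (b l) = 0) (v : V) : f v = ⟪b i, v⟫ • f (b i) := by
  conv_lhs => rw [← (b.toOrthonormalBasis hb).sum_repr' v]
  simp only [map_sum, map_smul, Module.Basis.coe_toOrthonormalBasis]
  exact Finset.sum_eq_single i (fun l _ hl => by rw [hf l hl, smul_zero])
    (fun h => absurd (Finset.mem_univ i) h)

namespace gaussR

variable (c : ℝ) (α : V →ₗ[ℝ] V →ₗ[ℝ] N)

theorem neg_third (X Y Z W : V) : gaussR c α X Y (-Z) W = -gaussR c α X Y Z W := by
  simp only [gaussR, inner_neg_right, map_neg, inner_neg_left]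
  ring

theorem map_third_add_map_fourth_eq_zero {J : V →ₗ[ℝ] V} (hJ2 : ∀ X : V, J (J X) = -X)
    (hKaehler : ∀ X Y Z W : V, gaussR c α X Y (J Z) (J W) = gaussR c α X Y Z W)
    (X Y Z W : V) : gaussR c α X Y (J Z) W + gaussR c α X Y Z (J W) = 0 := by
  have h := hKaehler X Y (J Z) W
  rw [hJ2, neg_third] at h
  linarith

variable {α} {ι : Type*}

theorem basis_basis_eq_zero_of_ne {b : ι → V} (hb : Orthonormal ℝ b)
    (hdiag : ∀ i j : ι, i ≠ j → α (b i) (b j) = 0) {i j k : ι} (hjk : j ≠ k) (hik : i ≠ k)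
    (Z : V) : gaussR c α (b i) (b j) Z (b k) = 0 := by
  simp only [gaussR, hdiag i k hik, hdiag j k hjk, hb.inner_eq_zero hik, hb.inner_eq_zero hjk,
    inner_zero_left, inner_zero_right]
  ring

theorem basis_basis_basis_eq_inner_mul [Fintype ι] {b : Module.Basis ι ℝ V}
    (hb : Orthonormal ℝ b) (hdiag : ∀ i j : ι, i ≠ j → α (b i) (b j) = 0)
    {i j : ι} (hij : i ≠ j) (W : V) :
    gaussR c α (b i) (b j) (b j) W = ⟪b i, W⟫ * (c + ⟪α (b i) (b i), α (b j) (b j)⟫) := by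
  have hαW : α (b i) W = ⟪b i, W⟫ • α (b i) (b i) :=
    b.map_eq_inner_smul_of_map_basis_eq_zero hb (fun l hl => hdiag i l hl.symm) W
  simp only [gaussR, hαW, hdiag i j hij, hb.inner_eq_zero hij, real_inner_self_eq_norm_sq,
    hb.norm_eq_one, real_inner_smul_left, inner_zero_left]
  ring

end gaussR

end

theorem stmt_8_general
    (V N : Type*) [NormedAddCommGroup V] [InnerProductSpace ℝ V]
    [NormedAddCommGroup N] [InnerProductSpace ℝ N]
    (n : ℕ) (c : ℝ)
    (J : V →ₗ[ℝ] V) (hJ2 : ∀ X : V, J (J X) = -X)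
    (hJorth : ∀ X Y : V, ⟪J X, J Y⟫ = ⟪X, Y⟫)
    (α : V →ₗ[ℝ] V →ₗ[ℝ] N)
    (hKaehler : ∀ X Y Z W : V, gaussR c α X Y (J Z) (J W) = gaussR c α X Y Z W)
    (b : Module.Basis (Fin (2 * n)) ℝ V) (hb : Orthonormal ℝ b)
    (hdiag : ∀ i j : Fin (2 * n), i ≠ j → α (b i) (b j) = 0)
    (i j k : Fin (2 * n)) (hij : i ≠ j) (hjk : j ≠ k) (hik : i ≠ k) :
    ⟪J (b i), b k⟫ * (c + ⟪α (b i) (b i), α (b j) (b j)⟫) = 0 := by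
  have h := gaussR.map_third_add_map_fourth_eq_zero c α hJ2 hKaehler (b i) (b j) (b j) (b k)
  rw [gaussR.basis_basis_eq_zero_of_ne c hb hdiag hjk hik,
    gaussR.basis_basis_basis_eq_inner_mul c hb hdiag hij, zero_add] at h
  rw [inner_map_left_eq_neg_inner_map_right hJ2 hJorth, neg_mul, h, neg_zero]

/-- equation (14) of Lemma 8: `⟨JX_i, X_k⟩ K_{ij} = 0`. -/
theorem stmt_8
    (V N : Type*) [NormedAddCommGroup V] [InnerProductSpace ℝ V] [FiniteDimensional ℝ V]
    [NormedAddCommGroup N] [InnerProductSpace ℝ N]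
    (n : ℕ) (c : ℝ)
    (J : V →ₗ[ℝ] V) (hJ2 : ∀ X : V, J (J X) = -X)
    (hJorth : ∀ X Y : V, ⟪J X, J Y⟫ = ⟪X, Y⟫)
    (α : V →ₗ[ℝ] V →ₗ[ℝ] N) (hαsymm : ∀ X Y : V, α X Y = α Y X)
    (hKaehler : ∀ X Y Z W : V, gaussR c α X Y (J Z) (J W) = gaussR c α X Y Z W)
    (b : Module.Basis (Fin (2 * n)) ℝ V) (hb : Orthonormal ℝ b)
    (hdiag : ∀ i j : Fin (2 * n), i ≠ j → α (b i) (b j) = 0)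
    (i j k : Fin (2 * n)) (hij : i ≠ j) (hjk : j ≠ k) (hik : i ≠ k) :
    ⟪J (b i), b k⟫ * (c + ⟪α (b i) (b i), α (b j) (b j)⟫) = 0 :=
  stmt_8_general V N n c J hJ2 hJorth α hKaehler b hb hdiag i j k hij hjk hik
end

section
/- Let V be a real inner product space with orthogonal complex structure J, L ⊆ V a J-invariant subspace, N an inner product space, φ: V × V → N symmetric bilinear with φ(JZ₁, JZ₂) = -φ(Z₁, Z₂) for Z₁, Z₂ ∈ L, δ ∈ N a unit vector with φ(X,Y) ⊥ δ for all X,Y, and A_δ = I on L (⟨A_δX, Z⟩ = ⟨X,Z⟩ for X ∈ V, Z ∈ L). If additionally dim N = 2 (so φ takes values in the 1-dimensional complement of δ) and ⟨φ(X,Z), φ(X,JZ)⟩ = 0 for all X ∈ V, Z ∈ L, then φ(X,Z) = 0 for all X ∈ V, Z ∈ L; consequently α(X,Z) = ⟨X,Z⟩δ for all X ∈ V, Z ∈ L. -/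
open scoped RealInnerProductSpace
open Module

/-! `φ` takes values in the line `δᗮ` of the plane `N`. On a line, two orthogonal vectors of
equal length vanish, and `φ(X, Z)`, `φ(X, JZ)` are such a pair. -/

theorem eq_zero_of_inner_eq_zero_of_norm_eq_of_finrank_eq_one {E : Type*} [NormedAddCommGroup E]
    [InnerProductSpace ℝ E] (hE : finrank ℝ E = 1) {u v : E} (h : ⟪u, v⟫ = 0)
    (hn : ‖u‖ = ‖v‖) : u = 0 := by
  by_contra hu
  obtain ⟨c, rfl⟩ := (finrank_eq_one_iff_of_nonzero' u hu).mp hE v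
  rw [real_inner_smul_right, mul_eq_zero, inner_self_eq_zero] at h
  rw [h.resolve_right hu, zero_smul, norm_zero, norm_eq_zero] at hn
  exact hu hn

theorem sub_inner_smul_mem_orthogonal_singleton {E : Type*} [NormedAddCommGroup E]
    [InnerProductSpace ℝ E] {δ : E} (hδ : ‖δ‖ = 1) (x : E) :
    x - ⟪x, δ⟫ • δ ∈ (ℝ ∙ δ)ᗮ := by
  rw [Submodule.mem_orthogonal_singleton_iff_inner_right, inner_sub_right, real_inner_smul_right,
    real_inner_self_eq_norm_sq, hδ, real_inner_comm]
  ring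

theorem finrank_orthogonal_span_singleton_eq_one {E : Type*} [NormedAddCommGroup E]
    [InnerProductSpace ℝ E] (hE : finrank ℝ E = 2) {δ : E} (hδ : δ ≠ 0) :
    finrank ℝ (ℝ ∙ δ)ᗮ = 1 :=
  have : FiniteDimensional ℝ E := Module.finite_of_finrank_pos (by omega)
  have : Fact (finrank ℝ E = 1 + 1) := ⟨hE⟩
  Submodule.finrank_orthogonal_span_singleton hδ

theorem stmt_18_general
    (V N : Type*) [NormedAddCommGroup V] [InnerProductSpace ℝ V]
    [NormedAddCommGroup N] [InnerProductSpace ℝ N]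
    (hN : Module.finrank ℝ N = 2)
    (J : V →ₗ[ℝ] V)
    (L : Submodule ℝ V)
    (α : V →ₗ[ℝ] V →ₗ[ℝ] N)
    (δ : N) (hδ : ‖δ‖ = 1)
    (φ : V → V → N) (hφ : ∀ X Y : V, φ X Y = α X Y - ⟪α X Y, δ⟫ • δ)
    (hAδ : ∀ X : V, ∀ Z ∈ L, ⟪α X Z, δ⟫ = ⟪X, Z⟫)
    (hflat : ∀ X₁ X₂ : V, ∀ Z₁ ∈ L, ∀ Z₂ ∈ L,
      ⟪φ X₁ Z₁, φ X₂ Z₂⟫ = ⟪φ X₁ (J Z₁), φ X₂ (J Z₂)⟫)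
    (horth : ∀ X : V, ∀ Z ∈ L, ⟪φ X Z, φ X (J Z)⟫ = 0) :
    ∀ X : V, ∀ Z ∈ L, φ X Z = 0 ∧ α X Z = ⟪X, Z⟫ • δ := by
  intro X Z hZ
  have hδ0 : δ ≠ 0 := norm_ne_zero_iff.mp (hδ ▸ one_ne_zero)
  have hmem (Y : V) : φ X Y ∈ (ℝ ∙ δ)ᗮ :=
    hφ X Y ▸ sub_inner_smul_mem_orthogonal_singleton hδ _
  have hnorm : ‖φ X Z‖ = ‖φ X (J Z)‖ := by
    rw [norm_eq_sqrt_real_inner, norm_eq_sqrt_real_inner, hflat X X Z hZ Z hZ]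
  have hzero : φ X Z = 0 := congrArg Subtype.val <|
    eq_zero_of_inner_eq_zero_of_norm_eq_of_finrank_eq_one
      (finrank_orthogonal_span_singleton_eq_one hN hδ0) (u := ⟨_, hmem Z⟩)
      (v := ⟨_, hmem (J Z)⟩) (horth X Z hZ) hnorm
  refine ⟨hzero, ?_⟩
  rw [← sub_eq_zero, ← hAδ X Z hZ, ← hφ, hzero]

/-- the dimension-count step in the proof of Theorem 1 (codimension 2):
`φ(X,Z) = 0` and hence `α(X,Z) = ⟨X,Z⟩ δ` for all `X ∈ V`, `Z ∈ L`. -/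
theorem stmt_18
    (V N : Type*) [NormedAddCommGroup V] [InnerProductSpace ℝ V] [FiniteDimensional ℝ V]
    [NormedAddCommGroup N] [InnerProductSpace ℝ N] [FiniteDimensional ℝ N]
    (hN : Module.finrank ℝ N = 2)
    (J : V →ₗ[ℝ] V) (hJ2 : ∀ X : V, J (J X) = -X)
    (hJorth : ∀ X Y : V, ⟪J X, J Y⟫ = ⟪X, Y⟫)
    (L : Submodule ℝ V) (hLJ : ∀ Z ∈ L, J Z ∈ L)
    (α : V →ₗ[ℝ] V →ₗ[ℝ] N) (hαsymm : ∀ X Y : V, α X Y = α Y X)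
    (δ : N) (hδ : ‖δ‖ = 1)
    (φ : V → V → N) (hφ : ∀ X Y : V, φ X Y = α X Y - ⟪α X Y, δ⟫ • δ)
    (hAδ : ∀ X : V, ∀ Z ∈ L, ⟪α X Z, δ⟫ = ⟪X, Z⟫)
    (hanti : ∀ Z₁ ∈ L, ∀ Z₂ ∈ L, φ (J Z₁) (J Z₂) = -φ Z₁ Z₂)
    (hflat : ∀ X₁ X₂ : V, ∀ Z₁ ∈ L, ∀ Z₂ ∈ L,
      ⟪φ X₁ Z₁, φ X₂ Z₂⟫ = ⟪φ X₁ (J Z₁), φ X₂ (J Z₂)⟫)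
    (horth : ∀ X : V, ∀ Z ∈ L, ⟪φ X Z, φ X (J Z)⟫ = 0) :
    ∀ X : V, ∀ Z ∈ L, φ X Z = 0 ∧ α X Z = ⟪X, Z⟫ • δ :=
  stmt_18_general V N hN J L α δ hδ φ hφ hAδ hflat horth
end

section
/- Let V be an inner product space of dimension 2n, N an inner product space, α: V × V → N symmetric bilinear with α(X,Z) = ⟨X,Z⟩δ for a unit vector δ ∈ N, all X ∈ V and all Z in a nonzero J-invariant subspace L (J an orthogonal complex structure on V). Suppose the curvature tensor R defined by the Gauss equation with c = -1 satisfies R(X,Y)∘J = J∘R(X,Y). Then ⟨α(X,X), δ⟩ = 1 for every unit vector X ∈ L^⊥; i.e., A_δ = I on all of V (using also A_δ = I on L). -/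
open scoped RealInnerProductSpace

/-! For `X ∈ Lᗮ` and `0 ≠ Z ∈ L` the Gauss equation gives
`⟨R(X,Z)Z,X⟩ = ⟨Z,Z⟩ (c⟨X,X⟩ + ⟨A_δX,X⟩)`, while `⟨R(X,Z)JZ,JX⟩ = 0`: every term contains
`⟨Z,JZ⟩ = 0` or `⟨X,JZ⟩ = 0` (as `JZ ∈ L`), possibly through `α(·,JZ) = ⟨·,JZ⟩δ`. So the Kaehler
identity forces `A_δ = -c I` on `Lᗮ`, hence on `Lᗮ × Lᗮ` by polarization; with `A_δ = ‖δ‖² I`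
against `L` and `V = L ⊕ Lᗮ` this gives `A_δ = I` when `c = -1` and `‖δ‖ = 1`. -/

section ComplexStructure

variable {V : Type*} [NormedAddCommGroup V] [InnerProductSpace ℝ V] {J : V →ₗ[ℝ] V}

theorem inner_self_map_eq_zero_of_isComplexStructure (hJ2 : ∀ X : V, J (J X) = -X)
    (hJorth : ∀ X Y : V, ⟪J X, J Y⟫ = ⟪X, Y⟫) (X : V) : ⟪X, J X⟫ = 0 := by
  have h := hJorth X (J X)
  rw [hJ2, inner_neg_right, real_inner_comm] at h
  linarith

end ComplexStructure

section GaussEquation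

variable {V N : Type*} [NormedAddCommGroup V] [InnerProductSpace ℝ V]
  [NormedAddCommGroup N] [InnerProductSpace ℝ N]
  {α : V →ₗ[ℝ] V →ₗ[ℝ] N} {δ : N} {L : Submodule ℝ V}

theorem gaussR_self_of_mem_orthogonal_of_mem (c : ℝ) (hαsymm : ∀ X Y : V, α X Y = α Y X)
    (hαL : ∀ X : V, ∀ Z ∈ L, α X Z = ⟪X, Z⟫ • δ) {X Z : V} (hX : X ∈ Lᗮ) (hZ : Z ∈ L) :
    gaussR c α X Z Z X = ⟪Z, Z⟫ * (c * ⟪X, X⟫ + ⟪α X X, δ⟫) := by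
  have hXZ : ⟪X, Z⟫ = 0 := Submodule.inner_left_of_mem_orthogonal hZ hX
  have hαXZ : α X Z = 0 := by rw [hαL X Z hZ, hXZ, zero_smul]
  have hZX : ⟪Z, X⟫ = 0 := Submodule.inner_right_of_mem_orthogonal hZ hX
  rw [gaussR, hαsymm Z X, hαXZ, hαL Z Z hZ, inner_smul_right]
  simp only [hXZ, hZX, inner_zero_left]
  ring

theorem gaussR_map_eq_zero_of_mem_orthogonal (c : ℝ) {J : V →ₗ[ℝ] V}
    (hαL : ∀ X : V, ∀ Z ∈ L, α X Z = ⟪X, Z⟫ • δ) {X Z : V} (hX : X ∈ Lᗮ) (hJZ : J Z ∈ L)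
    (hZJZ : ⟪Z, J Z⟫ = 0) :
    gaussR c α X Z (J Z) (J X) = 0 := by
  have hXJZ : ⟪X, J Z⟫ = 0 := Submodule.inner_left_of_mem_orthogonal hJZ hX
  have hαZJZ : α Z (J Z) = 0 := by rw [hαL Z (J Z) hJZ, hZJZ, zero_smul]
  have hαXJZ : α X (J Z) = 0 := by rw [hαL X (J Z) hJZ, hXJZ, zero_smul]
  simp [gaussR, hZJZ, hXJZ, hαZJZ, hαXJZ]

theorem inner_apply_self_eq_of_kaehler (c : ℝ) {J : V →ₗ[ℝ] V} (hJ2 : ∀ X : V, J (J X) = -X)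
    (hJorth : ∀ X Y : V, ⟪J X, J Y⟫ = ⟪X, Y⟫) (hαsymm : ∀ X Y : V, α X Y = α Y X)
    (hL : L ≠ ⊥) (hLJ : ∀ Z ∈ L, J Z ∈ L) (hαL : ∀ X : V, ∀ Z ∈ L, α X Z = ⟪X, Z⟫ • δ)
    (hKaehler : ∀ X Y Z W : V, gaussR c α X Y (J Z) (J W) = gaussR c α X Y Z W)
    {X : V} (hX : X ∈ Lᗮ) : ⟪α X X, δ⟫ = -c * ⟪X, X⟫ := by
  obtain ⟨Z, hZ, hZ0⟩ := Submodule.exists_mem_ne_zero_of_ne_bot hL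
  have hZJZ := inner_self_map_eq_zero_of_isComplexStructure hJ2 hJorth Z
  have h := hKaehler X Z Z X
  rw [gaussR_map_eq_zero_of_mem_orthogonal c hαL hX (hLJ Z hZ) hZJZ,
    gaussR_self_of_mem_orthogonal_of_mem c hαsymm hαL hX hZ] at h
  have hZZ : ⟪Z, Z⟫ ≠ 0 := inner_self_ne_zero.mpr hZ0
  have := (mul_eq_zero.mp h.symm).resolve_left hZZ
  linarith

end GaussEquation

section ShapeOperator

variable {V N : Type*} [NormedAddCommGroup V] [InnerProductSpace ℝ V]
  [NormedAddCommGroup N] [InnerProductSpace ℝ N]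
  {α : V →ₗ[ℝ] V →ₗ[ℝ] N} {δ : N}

theorem inner_apply_eq_of_inner_apply_self_eq {K : Submodule ℝ V} {a : ℝ}
    (hαsymm : ∀ X Y : V, α X Y = α Y X) (h : ∀ X ∈ K, ⟪α X X, δ⟫ = a * ⟪X, X⟫)
    {X Y : V} (hX : X ∈ K) (hY : Y ∈ K) : ⟪α X Y, δ⟫ = a * ⟪X, Y⟫ := by
  have hXY := h (X + Y) (K.add_mem hX hY)
  simp only [map_add, LinearMap.add_apply, inner_add_left, inner_add_right] at hXY
  rw [hαsymm Y X, h X hX, h Y hY, real_inner_comm X Y] at hXY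
  linarith

theorem inner_apply_eq_of_mem_of_mem_orthogonal (L : Submodule ℝ V) [L.HasOrthogonalProjection]
    (hαsymm : ∀ X Y : V, α X Y = α Y X) (hL : ∀ X : V, ∀ Z ∈ L, ⟪α X Z, δ⟫ = ⟪X, Z⟫)
    (hLperp : ∀ X ∈ Lᗮ, ∀ Y ∈ Lᗮ, ⟪α X Y, δ⟫ = ⟪X, Y⟫) (X Y : V) :
    ⟪α X Y, δ⟫ = ⟪X, Y⟫ := by
  obtain ⟨p, hp, q, hq, rfl⟩ := L.exists_add_mem_mem_orthogonal X
  obtain ⟨r, hr, s, hs, rfl⟩ := L.exists_add_mem_mem_orthogonal Y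
  have hps : ⟪α p s, δ⟫ = ⟪p, s⟫ := by rw [hαsymm, hL s p hp, real_inner_comm]
  simp only [map_add, LinearMap.add_apply, inner_add_left, inner_add_right]
  rw [hL p r hr, hL q r hr, hps, hLperp q hq s hs]

end ShapeOperator

theorem stmt_19_general
    (V N : Type*) [NormedAddCommGroup V] [InnerProductSpace ℝ V] [FiniteDimensional ℝ V]
    [NormedAddCommGroup N] [InnerProductSpace ℝ N]
    (J : V →ₗ[ℝ] V) (hJ2 : ∀ X : V, J (J X) = -X)
    (hJorth : ∀ X Y : V, ⟪J X, J Y⟫ = ⟪X, Y⟫)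
    (α : V →ₗ[ℝ] V →ₗ[ℝ] N) (hαsymm : ∀ X Y : V, α X Y = α Y X)
    (δ : N) (hδ : ‖δ‖ = 1)
    (L : Submodule ℝ V) (hL : L ≠ ⊥) (hLJ : ∀ Z ∈ L, J Z ∈ L)
    (hαL : ∀ X : V, ∀ Z ∈ L, α X Z = ⟪X, Z⟫ • δ)
    (hKaehler : ∀ X Y Z W : V,
      gaussR (-1) α X Y (J Z) (J W) = gaussR (-1) α X Y Z W) :
    (∀ X ∈ Lᗮ, ‖X‖ = 1 → ⟪α X X, δ⟫ = 1) ∧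
      ∀ X Y : V, ⟪α X Y, δ⟫ = ⟪X, Y⟫ := by
  have hLperp : ∀ X ∈ Lᗮ, ⟪α X X, δ⟫ = 1 * ⟪X, X⟫ := fun X hX => by
    simpa using inner_apply_self_eq_of_kaehler (-1) hJ2 hJorth hαsymm hL hLJ hαL hKaehler hX
  have hαLδ : ∀ X : V, ∀ Z ∈ L, ⟪α X Z, δ⟫ = ⟪X, Z⟫ := fun X Z hZ => by
    rw [hαL X Z hZ, real_inner_smul_left, real_inner_self_eq_norm_sq, hδ, one_pow, mul_one]
  refine ⟨fun X hX hX1 => ?_, inner_apply_eq_of_mem_of_mem_orthogonal L hαsymm hαLδ ?_⟩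
  · rw [hLperp X hX, one_mul, real_inner_self_eq_norm_sq, hX1, one_pow]
  · intro X hX Y hY
    simpa using inner_apply_eq_of_inner_apply_self_eq hαsymm hLperp hX hY

/-- the final computation in the proof of Theorem 1: `A_δ = I` on all
of `V`. -/
theorem stmt_19
    (V N : Type*) [NormedAddCommGroup V] [InnerProductSpace ℝ V] [FiniteDimensional ℝ V]
    [NormedAddCommGroup N] [InnerProductSpace ℝ N]
    (n : ℕ) (hV : Module.finrank ℝ V = 2 * n)
    (J : V →ₗ[ℝ] V) (hJ2 : ∀ X : V, J (J X) = -X)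
    (hJorth : ∀ X Y : V, ⟪J X, J Y⟫ = ⟪X, Y⟫)
    (α : V →ₗ[ℝ] V →ₗ[ℝ] N) (hαsymm : ∀ X Y : V, α X Y = α Y X)
    (δ : N) (hδ : ‖δ‖ = 1)
    (L : Submodule ℝ V) (hL : L ≠ ⊥) (hLJ : ∀ Z ∈ L, J Z ∈ L)
    (hαL : ∀ X : V, ∀ Z ∈ L, α X Z = ⟪X, Z⟫ • δ)
    (hKaehler : ∀ X Y Z W : V,
      gaussR (-1) α X Y (J Z) (J W) = gaussR (-1) α X Y Z W) :
    (∀ X ∈ Lᗮ, ‖X‖ = 1 → ⟪α X X, δ⟫ = 1) ∧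
      ∀ X Y : V, ⟪α X Y, δ⟫ = ⟪X, Y⟫ :=
  stmt_19_general V N J hJ2 hJorth α hαsymm δ hδ L hL hLJ hαL hKaehler
end
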